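/- arXiv:2503.00819 — 4 statements merged into one kernel-verified Lean document; each statement's English description precedes it below -/
import Mathlib

section
/- Let Λ = Z_p[[T]] and let M be a finitely generated Λ-module. Set ω_n(T) = (1+T)^{p^n} − 1. Suppose that for integers n ≥ m ≥ 0 and b ≥ a ≥ 0 we have #(M/ω_m M) ≥ p^a and #(M/ω_n M) ≤ p^b (in particular both quotients are finite). If b − a < n − m, then ω_n M = 0; in particular M is finite. -/
/-!
Write `N k = ω_k M`. Since `ω_{k+1} = ν_k ω_k` with `ν_k = Σ_{i<p} (1+T)^{i p^k}` of constant
term `p`, hence in the maximal ideal, the chain `N k` is decreasing, and Nakayama's lemma shows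
that it can only stop decreasing at `0`. Every prime other than `p` is a unit in `Λ`, so each
finite `Λ`-module has `p`-power order; thus every strict step between `m` and `n` multiplies
`#(M/N k)` by at least `p`. If no step were an equality we would get `p^(n-m+a) ≤ p^b`.
-/

open PowerSeries

section CardQuotient

variable {R : Type*} [Ring R] {p : ℕ}

theorem Module.not_prime_dvd_card_of_isUnit (A : Type*) [AddCommGroup A] [Module R A] [Finite A]
    {q : ℕ} (hq : q.Prime) (hu : IsUnit (q : R)) : ¬ q ∣ Nat.card A := by
  have : Fact q.Prime := ⟨hq⟩
  intro hdvd
  obtain ⟨x, hx⟩ := exists_prime_addOrderOf_dvd_card' q hdvd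
  have hx0 : x = 0 := by
    rw [← hu.smul_eq_zero, Nat.cast_smul_eq_nsmul, ← hx, addOrderOf_nsmul_eq_zero]
  rw [hx0, addOrderOf_zero] at hx
  exact hq.one_lt.ne hx

theorem Module.prime_dvd_card_of_nontrivial (hp : p.Prime)
    (hR : ∀ q : ℕ, q.Prime → q ≠ p → IsUnit (q : R))
    (A : Type*) [AddCommGroup A] [Module R A] [Finite A] [Nontrivial A] : p ∣ Nat.card A := by
  obtain ⟨q, hq, hqA⟩ := Nat.exists_prime_and_dvd (Finite.one_lt_card (α := A)).ne'
  obtain rfl | hqp := eq_or_ne q p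
  · exact hqA
  · exact absurd hqA (Module.not_prime_dvd_card_of_isUnit A hq (hR q hq hqp))

variable {M : Type*} [AddCommGroup M] [Module R M]

theorem Submodule.prime_mul_card_quotient_dvd (hp : p.Prime)
    (hR : ∀ q : ℕ, q.Prime → q ≠ p → IsUnit (q : R))
    {S T : Submodule R M} (hTS : T < S) [Finite (M ⧸ T)] :
    p * Nat.card (M ⧸ S) ∣ Nat.card (M ⧸ T) := by
  rw [← Submodule.card_quotient_mul_card_quotient S T hTS.le]
  have : Nontrivial (S.map T.mkQ) := by
    rw [Submodule.nontrivial_iff_ne_bot, Ne, ← LinearMap.le_ker_iff_map, Submodule.ker_mkQ]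
    exact hTS.not_ge
  exact mul_dvd_mul_right (Module.prime_dvd_card_of_nontrivial hp hR _) _

theorem Submodule.prime_pow_mul_card_quotient_dvd (hp : p.Prime)
    (hR : ∀ q : ℕ, q.Prime → q ≠ p → IsUnit (q : R))
    (N : ℕ → Submodule R M) {m n : ℕ} (hmn : m ≤ n)
    (hN : ∀ k, m ≤ k → k < n → N (k + 1) < N k) [Finite (M ⧸ N n)] :
    p ^ (n - m) * Nat.card (M ⧸ N m) ∣ Nat.card (M ⧸ N n) := by
  revert ‹Finite (M ⧸ N n)›
  induction n, hmn using Nat.le_induction with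
  | base => simp
  | succ n hmn ih =>
    intro
    have hlt := hN n hmn n.lt_succ_self
    have : Finite (M ⧸ N n) := Finite.of_surjective _ (Submodule.factor_surjective hlt.le)
    calc p ^ (n + 1 - m) * Nat.card (M ⧸ N m)
        = p * (p ^ (n - m) * Nat.card (M ⧸ N m)) := by
          rw [Nat.sub_add_comm hmn, pow_succ]; ring
      _ ∣ p * Nat.card (M ⧸ N n) :=
          mul_dvd_mul_left p (ih fun k hk hkn => hN k hk (by omega))
      _ ∣ Nat.card (M ⧸ N (n + 1)) := Submodule.prime_mul_card_quotient_dvd hp hR hlt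

end CardQuotient

theorem Submodule.span_singleton_smul_top_eq_bot_of_eq {R M : Type*} [CommRing R] [IsLocalRing R]
    [AddCommGroup M] [Module R M] [Module.Finite R M] {r ν : R} (hν : ¬ IsUnit ν)
    (h : (Ideal.span {ν * r} • ⊤ : Submodule R M) = Ideal.span {r} • ⊤) :
    (Ideal.span {r} • ⊤ : Submodule R M) = ⊥ := by
  refine Submodule.eq_bot_of_le_smul_of_le_jacobson_bot (Ideal.span {ν}) _ ?fg ?le ?jac
  case fg =>
    rw [Submodule.ideal_span_singleton_smul]
    exact (Module.finite_def.mp inferInstance).map _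
  case le =>
    rw [← Submodule.mul_smul, Ideal.span_singleton_mul_span_singleton, h]
  case jac =>
    rw [IsLocalRing.jacobson_eq_maximalIdeal ⊥ bot_ne_top, Ideal.span_singleton_le_iff_mem]
    exact hν

namespace PowerSeries

variable {p : ℕ} [Fact p.Prime]

theorem isUnit_natCast_padicInt_iff {n : ℕ} : IsUnit (n : ℤ_[p]⟦X⟧) ↔ p.Coprime n := by
  rw [isUnit_iff_constantCoeff, map_natCast, PadicInt.isUnit_iff,
    PadicInt.norm_natCast_eq_one_iff]

theorem exists_one_add_X_pow_pow_succ_sub_one_eq (k : ℕ) : ∃ ν : ℤ_[p]⟦X⟧, ¬ IsUnit ν ∧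
    (1 + X) ^ p ^ (k + 1) - 1 = ν * ((1 + X) ^ p ^ k - 1) := by
  refine ⟨∑ i ∈ Finset.range p, ((1 + X) ^ p ^ k) ^ i, ?_, ?_⟩
  · have hconst :
        constantCoeff (∑ i ∈ Finset.range p, ((1 + X : ℤ_[p]⟦X⟧) ^ p ^ k) ^ i) = p := by
      simp
    rw [isUnit_iff_constantCoeff, hconst]
    exact PadicInt.prime_p.not_isUnit
  · rw [geom_sum_mul, ← pow_mul, ← pow_succ]

end PowerSeries

theorem iwasawa_finiteness_lemma_general (p : ℕ) [Fact p.Prime]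
    (ω : ℕ → PowerSeries ℤ_[p])
    (hω : ∀ k, ω k = (1 + X) ^ (p ^ k) - 1)
    (M : Type*) [AddCommGroup M] [Module (PowerSeries ℤ_[p]) M]
    [Module.Finite (PowerSeries ℤ_[p]) M]
    (m n : ℕ) (a b : ℕ)
    [Finite (M ⧸ (Ideal.span {ω n} • ⊤ : Submodule (PowerSeries ℤ_[p]) M))]
    (ha : p ^ a ≤ Nat.card (M ⧸ (Ideal.span {ω m} • ⊤ : Submodule (PowerSeries ℤ_[p]) M)))
    (hb : Nat.card (M ⧸ (Ideal.span {ω n} • ⊤ : Submodule (PowerSeries ℤ_[p]) M)) ≤ p ^ b)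
    (h : b - a < n - m) :
    (Ideal.span {ω n} • ⊤ : Submodule (PowerSeries ℤ_[p]) M) = ⊥ ∧ Finite M := by
  set N : ℕ → Submodule ℤ_[p]⟦X⟧ M := fun k => Ideal.span {ω k} • ⊤
  have hstep (k : ℕ) : ∃ ν : ℤ_[p]⟦X⟧, ¬ IsUnit ν ∧ ω (k + 1) = ν * ω k := by
    simpa only [hω] using exists_one_add_X_pow_pow_succ_sub_one_eq k
  have hanti : Antitone N := antitone_nat_of_succ_le fun k => by
    obtain ⟨ν, -, hν⟩ := hstep k
    exact Submodule.smul_mono_left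
      (Ideal.span_singleton_le_span_singleton.mpr ⟨ν, by rw [hν, mul_comm]⟩)
  have hbot : N n = ⊥ := by
    by_contra hne
    have hstrict (k : ℕ) (_ : m ≤ k) (hkn : k < n) : N (k + 1) < N k := by
      refine (hanti k.le_succ).lt_of_ne fun heq => hne (eq_bot_iff.mpr ?_)
      obtain ⟨ν, hν, hνk⟩ := hstep k
      rw [← Submodule.span_singleton_smul_top_eq_bot_of_eq hν (by rw [← hνk]; exact heq)]
      exact hanti hkn.le
    have hunit (q : ℕ) (hq : q.Prime) (hqp : q ≠ p) : IsUnit (q : ℤ_[p]⟦X⟧) :=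
      isUnit_natCast_padicInt_iff.mpr ((Nat.coprime_primes Fact.out hq).mpr hqp.symm)
    have hdvd := Submodule.prime_pow_mul_card_quotient_dvd Fact.out hunit N (by omega) hstrict
    have hpow : p ^ (n - m + a) ≤ p ^ b := calc
      p ^ (n - m + a) ≤ p ^ (n - m) * Nat.card (M ⧸ N m) := by rw [pow_add]; gcongr
      _ ≤ Nat.card (M ⧸ N n) := Nat.le_of_dvd Nat.card_pos hdvd
      _ ≤ p ^ b := hb
    have := (Nat.pow_le_pow_iff_right (Fact.out : p.Prime).one_lt).mp hpow
    omega
  exact ⟨hbot, Finite.of_equiv _ (Submodule.quotEquivOfEqBot _ hbot).toEquiv⟩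

/-- Lemma 2.1 of the paper: bounds on two finite quotients force `ω_n M = 0`. -/
theorem iwasawa_finiteness_lemma (p : ℕ) [Fact p.Prime]
    (ω : ℕ → PowerSeries ℤ_[p])
    (hω : ∀ k, ω k = (1 + X) ^ (p ^ k) - 1)
    (M : Type*) [AddCommGroup M] [Module (PowerSeries ℤ_[p]) M]
    [Module.Finite (PowerSeries ℤ_[p]) M]
    (m n : ℕ) (hmn : m ≤ n) (a b : ℕ) (hab : a ≤ b)
    [Finite (M ⧸ (Ideal.span {ω m} • ⊤ : Submodule (PowerSeries ℤ_[p]) M))]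
    [Finite (M ⧸ (Ideal.span {ω n} • ⊤ : Submodule (PowerSeries ℤ_[p]) M))]
    (ha : p ^ a ≤ Nat.card (M ⧸ (Ideal.span {ω m} • ⊤ : Submodule (PowerSeries ℤ_[p]) M)))
    (hb : Nat.card (M ⧸ (Ideal.span {ω n} • ⊤ : Submodule (PowerSeries ℤ_[p]) M)) ≤ p ^ b)
    (h : b - a < n - m) :
    (Ideal.span {ω n} • ⊤ : Submodule (PowerSeries ℤ_[p]) M) = ⊥ ∧ Finite M :=
  iwasawa_finiteness_lemma_general p ω hω M m n a b ha hb h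
end

section
/- Let Λ = Z_p[[T]] and J an ideal of Λ. The Λ-module Λ/J is finite if and only if there exists n ≥ 0 such that J + (ω_n) = J + (ω_{n+1}), where ω_k(T) = (1+T)^{p^k} − 1. -/
/-!
Since `ω (n+1) = ω n * ν n` with `ν n = ∑_{i<p} (1+T)^{i p^n}` of constant term `p`, the factor
`ν n` lies in the maximal ideal of the local ring `Λ`. Hence if `J + (ω n) = J + (ω (n+1))`,
Nakayama's lemma gives `ω n ∈ J`, so `Λ/J = Λ/(J + (ω n))` is finite. Conversely, if `Λ/J` is
finite then the descending chain of ideals `J + (ω n)` of `Λ` is a descending chain of ideals of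
the Artinian ring `Λ/J`, so it stabilizes.
-/

open PowerSeries

namespace Ideal

variable {R : Type*} [CommRing R]

theorem exists_sup_eq_sup_succ_of_finite_quotient {J : Ideal R} [Finite (R ⧸ J)]
    {I : ℕ → Ideal R} (hI : Antitone I) : ∃ n, J ⊔ I n = J ⊔ I (n + 1) := by
  by_contra! h
  have comap_map : ∀ n, ((I n).map (Quotient.mk J)).comap (Quotient.mk J) = J ⊔ I n := fun n => by
    rw [comap_map_of_surjective _ Quotient.mk_surjective, ← RingHom.ker_eq_comap_bot, mk_ker,
      sup_comm]
  refine not_strictAnti_of_wellFoundedLT (fun n => (I n).map (Quotient.mk J))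
    (strictAnti_nat_of_succ_lt fun n => (map_mono (hI n.le_succ)).lt_of_ne fun heq => h n ?_)
  rw [← comap_map, ← comap_map, heq]

theorem sup_span_singleton_eq_left_of_eq_sup_span_mul {J : Ideal R} {a b : R}
    (hb : b ∈ jacobson ⊥) (h : J ⊔ span {a} = J ⊔ span {a * b}) : J ⊔ span {a} = J := by
  refine sup_eq_left.mpr (Submodule.le_of_le_smul_of_le_jacobson_bot
    (Submodule.fg_span_singleton a) ((span_singleton_le_iff_mem _).mpr hb) ?_)
  rw [smul_eq_mul, span_singleton_mul_span_singleton, mul_comm, ← h]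
  exact le_sup_right

end Ideal

theorem PowerSeries.exists_mem_maximalIdeal_one_add_X_pow_pow_succ_sub_one {R : Type*}
    [CommRing R] [IsLocalRing R] {p : ℕ} (hp : (p : R) ∈ IsLocalRing.maximalIdeal R) (n : ℕ) :
    ∃ b ∈ IsLocalRing.maximalIdeal R⟦X⟧,
      (1 + X : R⟦X⟧) ^ p ^ (n + 1) - 1 = ((1 + X) ^ p ^ n - 1) * b := by
  refine ⟨∑ i ∈ Finset.range p, ((1 + X : R⟦X⟧) ^ p ^ n) ^ i, ?_, ?_⟩
  · rw [IsLocalRing.mem_maximalIdeal, mem_nonunits_iff, isUnit_iff_constantCoeff]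
    simpa using hp
  · rw [mul_comm, geom_sum_mul, ← pow_mul, ← pow_succ]

/-- `Λ/J` is finite iff the chain of ideals `J + (ω_n)` stabilizes at some level. -/
theorem quotient_finite_iff_stabilizes (p : ℕ) [Fact p.Prime]
    (ω : ℕ → PowerSeries ℤ_[p])
    (hω : ∀ k, ω k = (1 + X) ^ (p ^ k) - 1)
    (J : Ideal (PowerSeries ℤ_[p]))
    (hfin : ∀ n, Finite (PowerSeries ℤ_[p] ⧸ (J + Ideal.span {ω n}))) :
    Finite (PowerSeries ℤ_[p] ⧸ J) ↔
      ∃ n, J + Ideal.span {ω n} = J + Ideal.span {ω (n + 1)} := by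
  choose b hb hfactor using fun n =>
    exists_mem_maximalIdeal_one_add_X_pow_pow_succ_sub_one (PadicInt.p_nonunit (p := p)) n
  simp only [← hω] at hfactor
  constructor
  · intro _
    exact Ideal.exists_sup_eq_sup_succ_of_finite_quotient (antitone_nat_of_succ_le fun n =>
      Ideal.span_singleton_le_span_singleton.mpr ⟨b n, hfactor n⟩)
  · rintro ⟨n, hn⟩
    have hJ : J ⊔ Ideal.span {ω n} = J :=
      Ideal.sup_span_singleton_eq_left_of_eq_sup_span_mul
        (IsLocalRing.maximalIdeal_le_jacobson _ (hb n)) (hfactor n ▸ hn)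
    simpa [hJ] using hfin n
end

section
/- Let Λ = Z_p[[T]] with ω_n(T) = (1+T)^{p^n} − 1, and let J ⊂ Λ be an ideal. If J + (ω_n) = J + (ω_{n+1}) for some n ≥ 0, then ω_n ∈ J. -/
/-!
Since `ω_{n+1} = Φ ω_n` with `Φ = ∑_{i<p} (1+T)^{i p^n}` and `Φ(0) = p`, the hypothesis gives
`ω_n = j + a Φ ω_n` with `j ∈ J`. As `Φ` lies in the Jacobson radical of `Λ`, the factor
`1 - a Φ` is a unit, so `ω_n = (1 - a Φ)⁻¹ j ∈ J` (Nakayama's lemma for `Λ ⧸ J`).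
-/

open PowerSeries

theorem Ideal.mem_of_mem_sup_span_mul {R : Type*} [CommRing R] {J : Ideal R} {x y : R}
    (hy : y ∈ (⊥ : Ideal R).jacobson) (hx : x ∈ J ⊔ Ideal.span {y * x}) : x ∈ J := by
  obtain ⟨j, hj, z, hz, hjz⟩ := Submodule.mem_sup.mp hx
  obtain ⟨a, rfl⟩ := Ideal.mem_span_singleton'.mp hz
  obtain ⟨u, hu⟩ := Ideal.mem_jacobson_bot.mp hy (-a)
  have hxu : x * u = j := by
    rw [hu]
    linear_combination -hjz
  rw [← Units.mul_inv_cancel_right x u, hxu]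
  exact J.mul_mem_right _ hj

theorem PowerSeries.mem_jacobson_bot_of_constantCoeff_mem {R : Type*} [CommRing R] {f : R⟦X⟧}
    (hf : constantCoeff f ∈ (⊥ : Ideal R).jacobson) : f ∈ (⊥ : Ideal R⟦X⟧).jacobson := by
  refine Ideal.mem_jacobson_bot.mpr fun g ↦ ?_
  rw [isUnit_iff_constantCoeff, map_add, map_mul, map_one]
  exact Ideal.mem_jacobson_bot.mp hf _

theorem PowerSeries.constantCoeff_geom_sum_one_add_X_pow {R : Type*} [CommSemiring R] (m p : ℕ) :
    constantCoeff (∑ i ∈ Finset.range p, ((1 + X : R⟦X⟧) ^ m) ^ i) = p := by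
  simp

theorem pow_pow_succ_sub_one_eq_geom_sum_mul {R : Type*} [CommRing R] (u : R) (p n : ℕ) :
    u ^ p ^ (n + 1) - 1 = (∑ i ∈ Finset.range p, (u ^ p ^ n) ^ i) * (u ^ p ^ n - 1) := by
  rw [geom_sum_mul, pow_succ, pow_mul]

theorem PadicInt.natCast_p_mem_jacobson_bot (p : ℕ) [Fact p.Prime] :
    (p : ℤ_[p]) ∈ (⊥ : Ideal ℤ_[p]).jacobson := by
  rw [IsLocalRing.jacobson_eq_maximalIdeal ⊥ bot_ne_top]
  exact PadicInt.p_nonunit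

/-- If `J + (ω_n) = J + (ω_{n+1})` then `ω_n ∈ J`. -/
theorem omega_mem_of_stabilizes (p : ℕ) [Fact p.Prime]
    (ω : ℕ → PowerSeries ℤ_[p])
    (hω : ∀ k, ω k = (1 + X) ^ (p ^ k) - 1)
    (J : Ideal (PowerSeries ℤ_[p])) (n : ℕ)
    (h : J + Ideal.span {ω n} = J + Ideal.span {ω (n + 1)}) :
    ω n ∈ J := by
  have hmem : ω n ∈ J ⊔ Ideal.span {ω (n + 1)} := by
    rw [← Ideal.add_eq_sup, ← h]
    exact Submodule.mem_sup_right (Ideal.mem_span_singleton_self _)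
  rw [hω (n + 1), pow_pow_succ_sub_one_eq_geom_sum_mul, ← hω n] at hmem
  refine Ideal.mem_of_mem_sup_span_mul (mem_jacobson_bot_of_constantCoeff_mem ?_) hmem
  rw [constantCoeff_geom_sum_one_add_X_pow]
  exact PadicInt.natCast_p_mem_jacobson_bot p
end

section
/- Let Λ = Z_3[[T]] and J = (T^2 + 3T − 9, 81). Then ω_4 = (1+T)^{81} − 1 lies in J but ω_3 = (1+T)^{27} − 1 does not, i.e., the level of stabilization of Λ/J is 4. -/
/-!
`X² + 3X − 9` is distinguished, so Weierstrass division identifies `Λ/(X² + 3X − 9)` with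
`ℤ₃[X]/(X² + 3X − 9)`, and membership of the polynomials `ω_n` in `J` can be decided in
`ℤ₃[X]`. Modulo `J`, cubing `1 + x` repeatedly gives `1 + 12x, 1 + 36x, 1 + 27x, 1`, so
`ω_4 ≡ 0` and `ω_3 ≡ 27x`; the latter is nonzero because `(ℤ/81)[x]/(x² + 3x − 9)` is free
over `ℤ/81` with basis `1, x`.
-/

open PowerSeries
open scoped Polynomial

namespace Polynomial

theorem isDistinguishedAt_X_sq_add_C_mul_X_add_C {A : Type*} [CommRing A] {I : Ideal A}
    {a b : A} (ha : a ∈ I) (hb : b ∈ I) : (X ^ 2 + C a * X + C b).IsDistinguishedAt I := by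
  refine ⟨⟨fun {n} hn ↦ ?_⟩, by monicity!⟩
  have hn2 : n < 2 := hn.trans_le (by compute_degree)
  interval_cases n <;> simp [coeff_X, coeff_C, ha, hb]

namespace IsDistinguishedAt

variable {A : Type*} [CommRing A] {g : A[X]} {I : Ideal A}

theorem coe_mem_span_pair_iff (H : g.IsDistinguishedAt I) [IsAdicComplete I A] {p h : A[X]} :
    (p : A⟦X⟧) ∈ Ideal.span {(g : A⟦X⟧), (h : A⟦X⟧)} ↔ p ∈ Ideal.span {g, h} := by
  refine ⟨fun hp ↦ ?_, fun hp ↦ ?_⟩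
  · obtain ⟨a, b, hab⟩ := Ideal.mem_span_pair.1 hp
    obtain ⟨r, hr⟩ :=
      Ideal.Quotient.mk_surjective (H.algEquivQuotient.symm (Ideal.Quotient.mk _ b))
    have hpr : Ideal.Quotient.mk _ p = Ideal.Quotient.mk (Ideal.span {g}) (r * h) := by
      apply H.algEquivQuotient.injective
      rw [map_mul, hr, map_mul, AlgEquiv.apply_symm_apply]
      simp only [algEquivQuotient_apply, Ideal.quotient_map_mkₐ, Ideal.Quotient.mkₐ_eq_mk,
        coeToPowerSeries.algHom_apply, Algebra.algebraMap_self, PowerSeries.map_id, id_eq]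
      rw [← hab, map_add, map_mul, map_mul,
        Ideal.Quotient.eq_zero_iff_mem.2 (Ideal.mem_span_singleton_self _), mul_zero, zero_add]
    obtain ⟨c, hc⟩ :=
      Ideal.mem_span_singleton'.1 ((Ideal.Quotient.mk_eq_mk_iff_sub_mem _ _).1 hpr)
    exact Ideal.mem_span_pair.2 ⟨c, r, by rw [hc]; ring⟩
  · simpa [Ideal.map_span, Set.image_pair] using
      Ideal.mem_map_of_mem (coeToPowerSeries.ringHom (R := A)) hp

end IsDistinguishedAt

end Polynomial

theorem AdjoinRoot.of_mul_root_ne_zero {R : Type*} [CommRing R] {f : R[X]} (hf : f.Monic)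
    (hdeg : 1 < f.degree) {c : R} (hc : c ≠ 0) : of f c * root f ≠ 0 := by
  rw [← mk_C, ← mk_X, ← map_mul]
  have hc1 : (Polynomial.C c * Polynomial.X).degree = 1 := Polynomial.degree_C_mul_X hc
  exact mk_ne_zero_of_degree_lt hf
    (Polynomial.ne_zero_of_degree_gt (n := 0) (hc1 ▸ WithBot.coe_lt_coe.2 one_pos)) (hc1 ▸ hdeg)

section

variable {R : Type*} [CommRing R] {x : R}

theorem one_add_pow_three_pow_three (hx : x ^ 2 + 3 * x - 9 = 0) (h81 : (81 : R) = 0) :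
    (1 + x) ^ 3 ^ 3 = 1 + 27 * x := by
  have h1 : (1 + x) ^ 3 = 1 + 12 * x := by linear_combination x * hx
  have h2 : (1 + 12 * x) ^ 3 = 1 + 36 * x := by
    linear_combination (1728 * x - 4752) * hx + (368 * x - 528) * h81
  have h3 : (1 + 36 * x) ^ 3 = 1 + 27 * x := by
    linear_combination (46656 * x - 136080) * hx + (10225 * x - 15120) * h81
  rw [pow_succ, pow_succ, pow_one, pow_mul, pow_mul, h1, h2, h3]

theorem one_add_pow_three_pow_four (hx : x ^ 2 + 3 * x - 9 = 0) (h81 : (81 : R) = 0) :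
    (1 + x) ^ 3 ^ 4 = 1 := by
  rw [pow_succ, pow_mul, one_add_pow_three_pow_three hx h81]
  linear_combination (19683 * x - 56862) * hx + (4294 * x - 6318) * h81

end

namespace Polynomial

theorem one_add_X_pow_three_pow_four_sub_one_mem {R : Type*} [CommRing R] :
    (1 + X : R[X]) ^ 3 ^ 4 - 1 ∈ Ideal.span {(X ^ 2 + 3 * X - 9 : R[X]), 81} := by
  set J := Ideal.span {(X ^ 2 + 3 * X - 9 : R[X]), 81}
  have hx : Ideal.Quotient.mk J (X ^ 2 + 3 * X - 9) = 0 :=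
    Ideal.Quotient.eq_zero_iff_mem.2 (Ideal.subset_span (Set.mem_insert _ _))
  have h81 : Ideal.Quotient.mk J 81 = 0 :=
    Ideal.Quotient.eq_zero_iff_mem.2 (Ideal.subset_span (Set.mem_insert_of_mem _ rfl))
  rw [map_sub, map_add, map_pow, map_mul, map_ofNat, map_ofNat] at hx
  rw [map_ofNat] at h81
  rw [← Ideal.Quotient.eq_zero_iff_mem, map_sub, map_pow, map_add, map_one,
    one_add_pow_three_pow_four hx h81, sub_self]

theorem one_add_X_pow_three_pow_three_sub_one_notMem :
    (1 + X : ℤ_[3][X]) ^ 3 ^ 3 - 1 ∉ Ideal.span {(X ^ 2 + 3 * X - 9 : ℤ_[3][X]), 81} := by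
  set f : (ZMod (3 ^ 4))[X] := X ^ 2 + 3 * X - 9 with hf
  set x := AdjoinRoot.root f
  have hx : x ^ 2 + 3 * x - 9 = 0 := by simpa [f] using AdjoinRoot.eval₂_root f
  have h81 : (81 : AdjoinRoot f) = 0 := by
    rw [← map_ofNat (AdjoinRoot.of f) 81, show (81 : ZMod (3 ^ 4)) = 0 by decide, map_zero]
  have h27x : 27 * x ≠ 0 := by
    rw [← map_ofNat (AdjoinRoot.of f) 27]
    refine AdjoinRoot.of_mul_root_ne_zero (by rw [hf]; monicity!) ?_ (by decide)
    rw [show f.degree = 2 by rw [hf]; compute_degree!]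
    exact WithBot.coe_lt_coe.2 one_lt_two
  set φ : ℤ_[3][X] →+* AdjoinRoot f :=
    eval₂RingHom ((AdjoinRoot.of f).comp (PadicInt.toZModPow 4)) x
  have hker : Ideal.span {(X ^ 2 + 3 * X - 9 : ℤ_[3][X]), 81} ≤ RingHom.ker φ := by
    simp [Ideal.span_le, Set.insert_subset_iff, φ, hx, h81]
  intro hmem
  have h := hker hmem
  simp only [RingHom.mem_ker, φ, coe_eval₂RingHom, eval₂_sub, eval₂_pow, eval₂_add, eval₂_one,
    eval₂_X] at h
  rw [one_add_pow_three_pow_three hx h81, add_sub_cancel_left] at h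
  exact h27x h

end Polynomial

theorem PadicInt.isDistinguishedAt_X_sq_add_three_mul_X_sub_nine :
    (Polynomial.X ^ 2 + 3 * Polynomial.X - 9 : ℤ_[3][X]).IsDistinguishedAt
      (IsLocalRing.maximalIdeal ℤ_[3]) := by
  have h3 : (3 : ℤ_[3]) ∈ IsLocalRing.maximalIdeal ℤ_[3] := by
    rw [maximalIdeal_eq_span_p]
    exact_mod_cast Ideal.mem_span_singleton_self _
  have h9 : (-9 : ℤ_[3]) ∈ IsLocalRing.maximalIdeal ℤ_[3] := by
    rw [show (-9 : ℤ_[3]) = -3 * 3 by norm_num]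
    exact Ideal.mul_mem_left _ _ h3
  convert Polynomial.isDistinguishedAt_X_sq_add_C_mul_X_add_C h3 h9 using 1
  simp only [map_neg, map_ofNat]
  ring

/-- For `J = (T² + 3T − 9, 81)` in `ℤ_3[[T]]`: `ω_4 ∈ J` but `ω_3 ∉ J`
(level of stabilization 4; discriminant `f = 59061`). -/
theorem exotic_59061 (ω : ℕ → PowerSeries ℤ_[3])
    (hω : ∀ m, ω m = (1 + X) ^ (3 ^ m) - 1) :
    ω 4 ∈ Ideal.span {(X : PowerSeries ℤ_[3]) ^ 2 + 3 * X - 9, 81} ∧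
    ω 3 ∉ Ideal.span {(X : PowerSeries ℤ_[3]) ^ 2 + 3 * X - 9, 81} := by
  have hJ : Ideal.span {(X : PowerSeries ℤ_[3]) ^ 2 + 3 * X - 9, 81} =
      Ideal.span {((Polynomial.X ^ 2 + 3 * Polynomial.X - 9 : ℤ_[3][X]) : ℤ_[3]⟦X⟧),
        ((81 : ℤ_[3][X]) : ℤ_[3]⟦X⟧)} := by
    simp only [← Polynomial.coeToPowerSeries.ringHom_apply, map_sub, map_add, map_mul, map_pow,
      map_ofNat]
    simp
  have hω' (m : ℕ) : ω m = (((1 + Polynomial.X) ^ 3 ^ m - 1 : ℤ_[3][X]) : ℤ_[3]⟦X⟧) := by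
    rw [hω]
    push_cast
    rfl
  have hf := PadicInt.isDistinguishedAt_X_sq_add_three_mul_X_sub_nine
  rw [hJ, hω', hω', hf.coe_mem_span_pair_iff, hf.coe_mem_span_pair_iff]
  exact ⟨Polynomial.one_add_X_pow_three_pow_four_sub_one_mem,
    Polynomial.one_add_X_pow_three_pow_three_sub_one_notMem⟩
end
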